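/- arXiv:1601.00553 — 3 statements merged into one kernel-verified Lean document; each statement's English description precedes it below -/
import Mathlib

section
/- Let k be an integral domain, W a set, V = W →₀ k the free k-module with basis W, and Π a simple term-rewriting system on V with respect to W. For every nonzero c ∈ k and all f, g ∈ V, one has f →*_Π g if and only if c·f →*_Π c·g, where →*_Π is the reflexive-transitive closure of the one-step rewriting relation →_Π. -/
/-- A term-rewriting system `Rw ⊆ W × (W →₀ k)` is simple if for every rule
`t → v`, the basis element `t` does not occur in the support of `v`. -/
def IsSimpleTRS {k W : Type*} [CommRing k] [IsDomain k]
    (Rw : W → (W →₀ k) → Prop) : Prop :=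
  ∀ t v, Rw t v → t ∉ v.support

/-- One-step rewriting: `f →_Π g` if there is a rule `t → v` such that the
coefficient of `t` in `f` is nonzero and `g = f - (f t)·t + (f t)·v`. -/
def OneStep {k W : Type*} [CommRing k] [IsDomain k]
    (Rw : W → (W →₀ k) → Prop) (f g : W →₀ k) : Prop :=
  ∃ t v, Rw t v ∧ f t ≠ 0 ∧ g = f - Finsupp.single t (f t) + f t • v

/-! Multiplication by `c ≠ 0` is an injective map on `W →₀ k` that commutes with rewriting in
both directions: the coefficient of `t` in `c • f` vanishes exactly when it does in `f`, and the
rewrite of `f` by `t → v` scales to the rewrite of `c • f` by the same rule. So the rewrite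
sequences starting at `c • f` are exactly the `c`-multiples of those starting at `f`. -/

namespace Relation

variable {α β : Type*} {r : α → α → Prop} {p : β → β → Prop}

theorem reflTransGen_map_iff {φ : α → β} (hφ : Function.Injective φ)
    (hstep : ∀ a b, p (φ a) b ↔ ∃ a', r a a' ∧ b = φ a') {a b : α} :
    ReflTransGen p (φ a) (φ b) ↔ ReflTransGen r a b := by
  refine ⟨fun h => ?_, fun h => h.lift φ fun a a' hr => (hstep a _).2 ⟨a', hr, rfl⟩⟩
  suffices ∀ x, ReflTransGen p x (φ b) → ∀ a, x = φ a → ReflTransGen r a b from this _ h a rfl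
  intro x hx
  induction hx using ReflTransGen.head_induction_on with
  | refl => exact fun a ha => hφ ha.symm ▸ .refl
  | head hxy _ ih =>
    rintro a rfl
    obtain ⟨a', haa', rfl⟩ := (hstep a _).1 hxy
    exact .head haa' (ih a' rfl)

end Relation

theorem Finsupp.smul_sub_single_add_smul {k W : Type*} [Ring k] (c : k) (f v : W →₀ k) (t : W) :
    c • (f - single t (f t) + f t • v) = c • f - single t ((c • f) t) + (c • f) t • v := by
  rw [smul_add, smul_sub, smul_single, smul_smul, smul_apply, smul_eq_mul]

theorem oneStep_smul_iff {k W : Type*} [CommRing k] [IsDomain k]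
    {Rw : W → (W →₀ k) → Prop} {c : k} (hc : c ≠ 0) (f h : W →₀ k) :
    OneStep Rw (c • f) h ↔ ∃ g, OneStep Rw f g ∧ h = c • g := by
  have hcoeff : ∀ t, (c • f) t ≠ 0 ↔ f t ≠ 0 := fun t => by
    rw [Finsupp.smul_apply, smul_eq_mul, mul_ne_zero_iff_left hc]
  constructor
  · rintro ⟨t, v, hrw, hft, rfl⟩
    exact ⟨_, ⟨t, v, hrw, (hcoeff t).1 hft, rfl⟩, (Finsupp.smul_sub_single_add_smul ..).symm⟩
  · rintro ⟨_, ⟨t, v, hrw, hft, rfl⟩, rfl⟩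
    exact ⟨t, v, hrw, (hcoeff t).2 hft, Finsupp.smul_sub_single_add_smul ..⟩

theorem reflTransGen_smul_iff_general {k W : Type*} [CommRing k] [IsDomain k]
    (Rw : W → (W →₀ k) → Prop)
    (c : k) (hc : c ≠ 0) (f g : W →₀ k) :
    Relation.ReflTransGen (OneStep Rw) f g ↔
      Relation.ReflTransGen (OneStep Rw) (c • f) (c • g) :=
  (Relation.reflTransGen_map_iff (smul_right_injective _ hc) (oneStep_smul_iff hc)).symm

/-- For a simple term-rewriting system and nonzero `c`:
`f →*_Π g` iff `c·f →*_Π c·g`. -/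
theorem reflTransGen_smul_iff {k W : Type*} [CommRing k] [IsDomain k]
    (Rw : W → (W →₀ k) → Prop) (hsimple : IsSimpleTRS Rw)
    (c : k) (hc : c ≠ 0) (f g : W →₀ k) :
    Relation.ReflTransGen (OneStep Rw) f g ↔
      Relation.ReflTransGen (OneStep Rw) (c • f) (c • g) :=
  reflTransGen_smul_iff_general Rw c hc f g
end

section
/- Let k be an integral domain, W a set, V = W →₀ k the free k-module with basis W, Π a simple term-rewriting system on V with respect to W, and ≤ a linear order on W compatible with Π. Fix w ∈ W, set Y = {y ∈ W : y < w}, and let Π_{kY} = {(t, v) ∈ Π : t ∈ Y and Supp(v) ⊆ Y}. If f, g ∈ V satisfy Supp(f) ⊆ Y and Supp(g) ⊆ Y, then f →*_Π g implies f →*_{Π_{kY}} g. -/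
/-!
A rewriting step `f ↦ f - c·t + c·v` fires only on a term `t` occurring in `f`, and can only
introduce terms of `v`. So if `Y` contains the support of `f` and every rule with head in `Y`
has its right-hand side supported in `Y`, the step is a step of the restricted system and
lands again in `kY`. For `Y = {y | y < w}` this closure property is compatibility of the
order: `Supp(v) < t < w`.
-/

open Finsupp

section

variable {k W : Type*}

theorem Finsupp.support_sub_single_add_smul_subset [Ring k] [DecidableEq W]
    (f v : W →₀ k) (t : W) :
    (f - single t (f t) + f t • v).support ⊆ f.support ∪ v.support := by
  rw [← erase_eq_sub_single]
  refine support_add.trans (Finset.union_subset_union ?_ support_smul)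
  rw [support_erase]
  exact Finset.erase_subset t f.support

/-- `Π_{kY}` in the paper. -/
def restrictTRS [CommRing k] (Rw : W → (W →₀ k) → Prop) (Y : Set W) : W → (W →₀ k) → Prop :=
  fun t v => Rw t v ∧ t ∈ Y ∧ ↑v.support ⊆ Y

variable [CommRing k] [IsDomain k] {Rw : W → (W →₀ k) → Prop} {Y : Set W}

theorem OneStep.restrict (hclosed : ∀ t v, Rw t v → t ∈ Y → ↑v.support ⊆ Y)
    {f g : W →₀ k} (hf : ↑f.support ⊆ Y) (h : OneStep Rw f g) :
    OneStep (restrictTRS Rw Y) f g ∧ ↑g.support ⊆ Y := by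
  classical
  obtain ⟨t, v, hrw, hft, rfl⟩ := h
  have htY : t ∈ Y := hf (mem_support_iff.mpr hft)
  have hvY : ↑v.support ⊆ Y := hclosed t v hrw htY
  refine ⟨⟨t, v, ⟨hrw, htY, hvY⟩, hft, rfl⟩, ?_⟩
  calc ↑(f - single t (f t) + f t • v).support
      ⊆ (↑(f.support ∪ v.support) : Set W) :=
        Finset.coe_subset.mpr (support_sub_single_add_smul_subset f v t)
    _ ⊆ Y := by simpa only [Finset.coe_union] using Set.union_subset hf hvY

theorem Relation.ReflTransGen.restrict_oneStep
    (hclosed : ∀ t v, Rw t v → t ∈ Y → ↑v.support ⊆ Y)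
    {f g : W →₀ k} (hf : ↑f.support ⊆ Y) (h : Relation.ReflTransGen (OneStep Rw) f g) :
    Relation.ReflTransGen (OneStep (restrictTRS Rw Y)) f g := by
  induction h using Relation.ReflTransGen.head_induction_on with
  | refl => exact .refl
  | head hstep _ ih =>
    obtain ⟨hstep', hY⟩ := hstep.restrict hclosed hf
    exact .head hstep' (ih hY)

end

theorem reflTransGen_restrict_general {k W : Type*} [CommRing k] [IsDomain k]
    [LinearOrder W]
    (Rw : W → (W →₀ k) → Prop)
    (hcompat : ∀ t v, Rw t v → ∀ s ∈ v.support, s < t)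
    (w : W) (f g : W →₀ k)
    (hf : ∀ s ∈ f.support, s < w)
    (h : Relation.ReflTransGen (OneStep Rw) f g) :
    Relation.ReflTransGen
      (OneStep (fun t v => Rw t v ∧ t < w ∧ ∀ s ∈ v.support, s < w)) f g :=
  h.restrict_oneStep (Y := Set.Iio w)
    (fun t v hrw htw s hs => (hcompat t v hrw s hs).trans htw) hf

/-- Let `≤` be a linear order on `W` compatible with the simple term-rewriting
system `Π`, `w ∈ W`, `Y = {y : y < w}`, and `Π_{kY}` the restriction of `Π` to
rules `t → v` with `t ∈ Y` and `Supp(v) ⊆ Y`. If `Supp(f) ⊆ Y`, `Supp(g) ⊆ Y`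
and `f →*_Π g`, then `f →*_{Π_{kY}} g`. -/
theorem reflTransGen_restrict {k W : Type*} [CommRing k] [IsDomain k]
    [LinearOrder W]
    (Rw : W → (W →₀ k) → Prop) (hsimple : IsSimpleTRS Rw)
    (hcompat : ∀ t v, Rw t v → ∀ s ∈ v.support, s < t)
    (w : W) (f g : W →₀ k)
    (hf : ∀ s ∈ f.support, s < w) (hg : ∀ s ∈ g.support, s < w)
    (h : Relation.ReflTransGen (OneStep Rw) f g) :
    Relation.ReflTransGen
      (OneStep (fun t v => Rw t v ∧ t < w ∧ ∀ s ∈ v.support, s < w)) f g :=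
  reflTransGen_restrict_general Rw hcompat w f g hf h
end

section
/- Let k be an integral domain, W a set, V = W →₀ k the free k-module with basis W, and Π a simple terminating term-rewriting system on V with respect to W, compatible with a well-order ≤ on W. If every basis element w ∈ W (regarded as the element 1·w of V) is locally confluent, then Π is locally base-confluent: for every nonzero c ∈ k and every pair of rewriting rules w → v₁, w → v₂ ∈ Π with the same left-hand side w, one has c·v₁ − c·v₂ →*_Π 0. -/
/-- `f` and `g` are joinable: both rewrite to a common element. -/
def Joinable {k W : Type*} [CommRing k] [IsDomain k]
    (Rw : W → (W →₀ k) → Prop) (f g : W →₀ k) : Prop :=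
  ∃ u, Relation.ReflTransGen (OneStep Rw) f u ∧
    Relation.ReflTransGen (OneStep Rw) g u

open Finsupp Set Relation

section RuleSpan

variable {k W : Type*} [Ring k] {Rw : W → (W →₀ k) → Prop}

variable (Rw) in
noncomputable def ruleSpan [LT W] (t : W) : Submodule k (W →₀ k) :=
  Submodule.span k {x | ∃ s v, s < t ∧ Rw s v ∧ single s 1 - v = x}

theorem rule_mem_ruleSpan [LT W] {s t : W} {v : W →₀ k} (hst : s < t) (hr : Rw s v) :
    single s 1 - v ∈ ruleSpan Rw t :=
  Submodule.subset_span ⟨s, v, hst, hr, rfl⟩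

theorem ruleSpan_mono [Preorder W] {t t' : W} (h : t ≤ t') : ruleSpan Rw t ≤ ruleSpan Rw t' :=
  Submodule.span_mono fun _ ⟨s, v, hs, hr, hx⟩ => ⟨s, v, hs.trans_le h, hr, hx⟩

theorem rhs_mem_supported_Iio [Preorder W] (hcompat : ∀ t v, Rw t v → ∀ s ∈ v.support, s < t)
    {s t : W} {v : W →₀ k} (hr : Rw s v) (hst : s ≤ t) : v ∈ supported k k (Iio t) :=
  supported_mono (Iio_subset_Iio hst) ((mem_supported k v).2 (hcompat s v hr))

theorem ruleSpan_le_supported_Iio [Preorder W]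
    (hcompat : ∀ t v, Rw t v → ∀ s ∈ v.support, s < t) (t : W) :
    ruleSpan Rw t ≤ supported k k (Iio t) := by
  rw [ruleSpan, Submodule.span_le]
  rintro _ ⟨s, v, hst, hr, rfl⟩
  exact sub_mem (single_mem_supported k 1 hst) (rhs_mem_supported_Iio hcompat hr hst.le)

theorem mem_ruleSpan_of_sub_smul_mem [Preorder W] {m t : W} {v x : W →₀ k} {c : k}
    (hmt : m < t) (hr : Rw m v) (hx : x - c • (single m 1 - v) ∈ ruleSpan Rw m) :
    x ∈ ruleSpan Rw t := by
  simpa using add_mem (ruleSpan_mono hmt.le hx) (Submodule.smul_mem _ c (rule_mem_ruleSpan hmt hr))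

theorem eq_zero_or_exists_leading_rule_of_mem_ruleSpan [LinearOrder W]
    (hdiff : ∀ s v v', Rw s v → Rw s v' → v - v' ∈ ruleSpan Rw s) {t : W} {x : W →₀ k}
    (hx : x ∈ ruleSpan Rw t) :
    x = 0 ∨ ∃ m < t, ∃ v, Rw m v ∧ ∃ c : k, x - c • (single m 1 - v) ∈ ruleSpan Rw m := by
  induction hx using Submodule.span_induction with
  | mem _ h =>
    obtain ⟨s, v, hs, hr, rfl⟩ := h
    exact .inr ⟨s, hs, v, hr, 1, by simp⟩
  | zero => exact .inl rfl
  | add x y _ _ hx hy =>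
    rcases hx with rfl | ⟨m, hm, v, hr, c, hc⟩
    · simpa using hy
    rcases hy with rfl | ⟨m', hm', v', hr', c', hc'⟩
    · exact .inr ⟨m, hm, v, hr, c, by simpa using hc⟩
    right
    rcases lt_trichotomy m m' with h | rfl | h
    · refine ⟨m', hm', v', hr', c', ?_⟩
      rw [add_sub_assoc]
      exact add_mem (mem_ruleSpan_of_sub_smul_mem h hr hc) hc'
    · refine ⟨m, hm, v, hr, c + c', ?_⟩
      convert add_mem (add_mem hc hc') (Submodule.smul_mem _ c' (hdiff m v v' hr hr')) using 1
      simp only [smul_sub, add_smul]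
      abel
    · refine ⟨m, hm, v, hr, c, ?_⟩
      rw [add_sub_right_comm]
      exact add_mem hc (mem_ruleSpan_of_sub_smul_mem h hr' hc')
  | smul a x _ hx =>
    rcases hx with rfl | ⟨m, hm, v, hr, c, hc⟩
    · simp
    exact .inr ⟨m, hm, v, hr, a * c, by simpa [mul_smul, smul_sub] using Submodule.smul_mem _ a hc⟩

end RuleSpan

section Rewriting

variable {k W : Type*} [CommRing k] [IsDomain k] {Rw : W → (W →₀ k) → Prop}

theorem oneStep_single_of_rule {t : W} {v : W →₀ k} (hr : Rw t v) :
    OneStep Rw (single t 1) v :=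
  ⟨t, v, hr, by simp, by simp⟩

theorem OneStep.exists_sub_eq_smul_rule [Preorder W] {t : W} {a b : W →₀ k} (ha : a ∈ supported k k (Iio t))
    (h : OneStep Rw a b) : ∃ s < t, ∃ v, Rw s v ∧ a - b = a s • (single s 1 - v) := by
  obtain ⟨s, v, hr, hs, rfl⟩ := h
  refine ⟨s, (mem_supported k a).1 ha (mem_support_iff.2 hs), v, hr, ?_⟩
  rw [smul_sub, smul_single_one]
  abel

theorem OneStep.sub_mem_ruleSpan [Preorder W] {t : W} {a b : W →₀ k}
    (ha : a ∈ supported k k (Iio t)) (h : OneStep Rw a b) : a - b ∈ ruleSpan Rw t := by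
  obtain ⟨s, hst, v, hr, hab⟩ := h.exists_sub_eq_smul_rule ha
  exact hab ▸ Submodule.smul_mem _ _ (rule_mem_ruleSpan hst hr)

theorem OneStep.mem_supported_Iio [Preorder W]
    (hcompat : ∀ t v, Rw t v → ∀ s ∈ v.support, s < t) {t : W} {a b : W →₀ k}
    (ha : a ∈ supported k k (Iio t)) (h : OneStep Rw a b) : b ∈ supported k k (Iio t) := by
  have hab := h.sub_mem_ruleSpan ha
  simpa using sub_mem ha (ruleSpan_le_supported_Iio hcompat t hab)

theorem ReflTransGen.sub_mem_ruleSpan [Preorder W]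
    (hcompat : ∀ t v, Rw t v → ∀ s ∈ v.support, s < t) {t : W} {a b : W →₀ k}
    (ha : a ∈ supported k k (Iio t)) (h : ReflTransGen (OneStep Rw) a b) :
    b ∈ supported k k (Iio t) ∧ a - b ∈ ruleSpan Rw t := by
  induction h with
  | refl => simpa using ha
  | tail _ hstep ih =>
    exact ⟨hstep.mem_supported_Iio hcompat ih.1,
      by simpa using add_mem ih.2 (hstep.sub_mem_ruleSpan ih.1)⟩

theorem Joinable.sub_mem_ruleSpan [Preorder W]
    (hcompat : ∀ t v, Rw t v → ∀ s ∈ v.support, s < t) {t : W} {f g : W →₀ k}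
    (hf : f ∈ supported k k (Iio t)) (hg : g ∈ supported k k (Iio t)) (h : Joinable Rw f g) :
    f - g ∈ ruleSpan Rw t := by
  obtain ⟨u, hfu, hgu⟩ := h
  simpa using sub_mem (ReflTransGen.sub_mem_ruleSpan hcompat hf hfu).2
    (ReflTransGen.sub_mem_ruleSpan hcompat hg hgu).2

theorem reflTransGen_zero_of_mem_ruleSpan [LinearOrder W] [WellFoundedLT W]
    (hcompat : ∀ t v, Rw t v → ∀ s ∈ v.support, s < t)
    (hdiff : ∀ s v v', Rw s v → Rw s v' → v - v' ∈ ruleSpan Rw s) (t : W) {x : W →₀ k}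
    (hx : x ∈ ruleSpan Rw t) : ReflTransGen (OneStep Rw) x 0 := by
  induction t using WellFoundedLT.induction generalizing x with
  | _ t ih =>
  rcases eq_zero_or_exists_leading_rule_of_mem_ruleSpan hdiff hx with
    rfl | ⟨m, hm, v, hr, c, hy⟩
  · exact .refl
  set y := x - c • (single m 1 - v) with hy_def
  have hxm : x m = c := by
    have hym : y m = 0 :=
      (mem_supported' k y).1 (ruleSpan_le_supported_Iio hcompat m hy) m (lt_irrefl m)
    have hvm : v m = 0 :=
      (mem_supported' k v).1 (rhs_mem_supported_Iio hcompat hr le_rfl) m (lt_irrefl m)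
    simpa [y, hvm, sub_eq_zero] using hym
  have hxy : ReflTransGen (OneStep Rw) x y := by
    by_cases hc : c = 0
    · simpa [y, hc] using ReflTransGen.refl
    · refine .single ⟨m, v, hr, hxm ▸ hc, ?_⟩
      rw [hxm, hy_def, smul_sub, smul_single_one]
      abel
  exact hxy.trans (ih m hm hy)

end Rewriting

theorem basis_locally_confluent_implies_base_confluent_general
    {k W : Type*} [CommRing k] [IsDomain k]
    [LinearOrder W] [WellFoundedLT W]
    (Rw : W → (W →₀ k) → Prop)
    (hcompat : ∀ t v, Rw t v → ∀ s ∈ v.support, s < t)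
    (hbasis : ∀ w : W, ∀ g h : W →₀ k, OneStep Rw (Finsupp.single w 1) g →
        OneStep Rw (Finsupp.single w 1) h → Joinable Rw g h) :
    ∀ c : k, c ≠ 0 → ∀ (w : W) (v₁ v₂ : W →₀ k), Rw w v₁ → Rw w v₂ →
      Relation.ReflTransGen (OneStep Rw) (c • v₁ - c • v₂) 0 := by
  intro c _ w v₁ v₂ h₁ h₂
  have hdiff : ∀ s v v', Rw s v → Rw s v' → v - v' ∈ ruleSpan Rw s := fun s v v' hv hv' =>
    (hbasis s v v' (oneStep_single_of_rule hv) (oneStep_single_of_rule hv')).sub_mem_ruleSpan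
      hcompat (rhs_mem_supported_Iio hcompat hv le_rfl) (rhs_mem_supported_Iio hcompat hv' le_rfl)
  rw [← smul_sub]
  exact reflTransGen_zero_of_mem_ruleSpan hcompat hdiff w
    (Submodule.smul_mem _ c (hdiff w v₁ v₂ h₁ h₂))

/-- Let `Π` be a simple terminating term-rewriting system compatible with a
well-order on `W`. If every basis element `w ∈ W` (i.e. `1·w ∈ V`) is locally
confluent, then `Π` is locally base-confluent: for every nonzero `c ∈ k` and
rules `w → v₁`, `w → v₂` in `Π`, one has `c·v₁ − c·v₂ →*_Π 0`. -/
theorem basis_locally_confluent_implies_base_confluent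
    {k W : Type*} [CommRing k] [IsDomain k]
    [LinearOrder W] [WellFoundedLT W]
    (Rw : W → (W →₀ k) → Prop) (hsimple : IsSimpleTRS Rw)
    (hterm : ¬ ∃ F : ℕ → (W →₀ k), ∀ n, OneStep Rw (F n) (F (n + 1)))
    (hcompat : ∀ t v, Rw t v → ∀ s ∈ v.support, s < t)
    (hbasis : ∀ w : W, ∀ g h : W →₀ k, OneStep Rw (Finsupp.single w 1) g →
        OneStep Rw (Finsupp.single w 1) h → Joinable Rw g h) :
    ∀ c : k, c ≠ 0 → ∀ (w : W) (v₁ v₂ : W →₀ k), Rw w v₁ → Rw w v₂ →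
      Relation.ReflTransGen (OneStep Rw) (c • v₁ - c • v₂) 0 :=
  basis_locally_confluent_implies_base_confluent_general Rw hcompat hbasis
end
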